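/- arXiv:2109.12185 — 6 statements merged into one kernel-verified Lean document; each statement's English description precedes it below -/
import Mathlib

section
/- Let v > 1, let t ≥ 0 and x ≥ 0 with t ≥ x, x ≤ a, and a > 0. If x = a(v-1)/(v+1), then (t + a - x)/(t + (a-x)/v) ≤ (v² + v)/(v² - v + 2). -/
/-! Since `a - x ≥ (a - x) / v`, the ratio `(t + (a - x)) / (t + (a - x) / v)` decreases in `t`,
so under `t ≥ x` it is largest at `t = x`, where it equals `a / (x + (a - x) / v)`. For the
optimal handover point `x = a (v - 1) / (v + 1)` this is exactly `(v² + v) / (v² - v + 2)`. -/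

theorem add_div_add_le_add_div_add_of_le {p q s t : ℝ} (hsq : 0 < s + q) (hqp : q ≤ p)
    (hst : s ≤ t) : (t + p) / (t + q) ≤ (s + p) / (s + q) := by
  rw [div_le_div_iff₀ (by linarith) hsq]
  nlinarith [mul_nonneg (sub_nonneg.2 hqp) (sub_nonneg.2 hst)]

theorem sub_mul_sub_one_div_add_one (a : ℝ) {v : ℝ} (hv : v + 1 ≠ 0) :
    a - a * (v - 1) / (v + 1) = 2 * a / (v + 1) := by
  field_simp
  ring

theorem div_add_sub_div_eq_of_eq_mul_sub_one_div_add_one {a v x : ℝ} (ha : a ≠ 0) (hv0 : v ≠ 0)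
    (hv : v + 1 ≠ 0) (hx : x = a * (v - 1) / (v + 1)) :
    a / (x + (a - x) / v) = (v ^ 2 + v) / (v ^ 2 - v + 2) := by
  have hquad : v ^ 2 - v + 2 ≠ 0 := by nlinarith [sq_nonneg (2 * v - 1)]
  rw [hx, sub_mul_sub_one_div_add_one a hv]
  field_simp

theorem competitive_ineq_general (v t x a : ℝ) (hv : 1 < v)
    (htx : x ≤ t) (ha : 0 < a)
    (hxval : x = a * (v - 1) / (v + 1)) :
    (t + a - x) / (t + (a - x) / v) ≤ (v ^ 2 + v) / (v ^ 2 - v + 2) := by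
  have hv1 : v + 1 ≠ 0 := by linarith
  have hx : 0 < x := hxval ▸ div_pos (mul_pos ha (by linarith)) (by linarith)
  have hax : 0 < a - x := by
    rw [hxval, sub_mul_sub_one_div_add_one a hv1]
    positivity
  calc (t + a - x) / (t + (a - x) / v) = (t + (a - x)) / (t + (a - x) / v) := by
        rw [add_sub_assoc]
    _ ≤ (x + (a - x)) / (x + (a - x) / v) :=
        add_div_add_le_add_div_add_of_le (by positivity) (div_le_self hax.le hv.le) htx
    _ = a / (x + (a - x) / v) := by rw [add_sub_cancel]
    _ = (v ^ 2 + v) / (v ^ 2 - v + 2) :=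
        div_add_sub_div_eq_of_eq_mul_sub_one_div_add_one ha.ne' (by linarith) hv1 hxval

/-- competitive-analysis inequality for the two-robot online
algorithm. -/
theorem competitive_ineq (v t x a : ℝ) (hv : 1 < v) (ht : 0 ≤ t) (hx : 0 ≤ x)
    (htx : x ≤ t) (hxa : x ≤ a) (ha : 0 < a)
    (hxval : x = a * (v - 1) / (v + 1)) :
    (t + a - x) / (t + (a - x) / v) ≤ (v ^ 2 + v) / (v ^ 2 - v + 2) :=
  competitive_ineq_general v t x a hv htx ha hxval
end

section
/- For all real v > 1, (v² + v)/(v² - v + 2) ≤ (5 + 4√2)/7, with equality when v = 1 + √2. -/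
/-- for v > 1, (v² + v)/(v² - v + 2) ≤ (5 + 4√2)/7, with equality
at v = 1 + √2. -/
theorem ratio_max :
    (∀ v : ℝ, 1 < v →
      (v ^ 2 + v) / (v ^ 2 - v + 2) ≤ (5 + 4 * Real.sqrt 2) / 7) ∧
    ((1 + Real.sqrt 2) ^ 2 + (1 + Real.sqrt 2)) /
        ((1 + Real.sqrt 2) ^ 2 - (1 + Real.sqrt 2) + 2)
      = (5 + 4 * Real.sqrt 2) / 7 := by
  have h2 : Real.sqrt 2 ^ 2 = 2 := Real.sq_sqrt (by norm_num)
  have h1 : (1:ℝ) < Real.sqrt 2 := by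
    nlinarith [Real.sqrt_nonneg 2]
  constructor
  · intro v hv
    have hd : (0:ℝ) < v ^ 2 - v + 2 := by nlinarith
    rw [div_le_div_iff₀ hd (by norm_num)]
    nlinarith [sq_nonneg (v - (1 + Real.sqrt 2)), sq_nonneg (v - 1)]
  · rw [div_eq_div_iff (by nlinarith) (by norm_num)]
    ring_nf
    nlinarith
end

section
/- The online delivery algorithm in which each robot independently moves to the source S and then to the destination D has competitive ratio at most (5 + 4√2)/7 for two robots: for any instance with robots of speeds 1 and v > 1, the minimum over the two robots of their solo delivery times is at most (5+4√2)/7 times the optimal cooperative delivery time. -/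
lemma key_poly (v a b s : ℝ) (hv : 1 < v) (ha : 0 ≤ a) (hb : 0 ≤ b)
    (hs2 : s ^ 2 = 2) (hs1 : 1 < s)
    (H : (5 + 4 * s) * (a + b) ≤ 7 * (a + v * b)) :
    7 * (a * v + 2 * a + b * v) ≤ (5 + 4 * s) * (a + b) * v := by
  rcases le_total ((4 * s - 2) * v) 14 with hcase | hcase
  · have h4s : (0:ℝ) < 4 * s - 2 := by linarith
    have identity : (4 * s - 2) * ((5 + 4 * s) * (a + b) * v - 7 * (a * v + 2 * a + b * v)) =
        (7 * (a + v * b) - (5 + 4 * s) * (a + b)) * (14 - (4 * s - 2) * v)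
          + 14 * (2 * s - 1) * (b * (v - 1 - s) ^ 2) := by
      linear_combination (14 * b * (4 * v - 2 * s - 3)) * hs2
    have hnn : 0 ≤ (4 * s - 2) * ((5 + 4 * s) * (a + b) * v - 7 * (a * v + 2 * a + b * v)) := by
      rw [identity]
      have t1 : 0 ≤ (7 * (a + v * b) - (5 + 4 * s) * (a + b)) * (14 - (4 * s - 2) * v) :=
        mul_nonneg (by linarith) (by linarith)
      have t2 : 0 ≤ 14 * (2 * s - 1) * (b * (v - 1 - s) ^ 2) :=
        mul_nonneg (by linarith) (mul_nonneg hb (sq_nonneg _))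
      linarith
    nlinarith [hnn, h4s]
  · nlinarith [mul_nonneg ha (by linarith : (0:ℝ) ≤ (4 * s - 2) * v - 14),
      mul_nonneg (mul_nonneg hb (by linarith : (0:ℝ) ≤ 4 * s - 2)) (by linarith : (0:ℝ) ≤ v)]

/-- the online algorithm (each robot goes solo S then D) has
competitive ratio at most (5 + 4√2)/7 for two robots: robot r₁ (speed 1) starts
at the source S, robot r₂ (speed v > 1) starts at K, and M is the optimal
handover point, reached simultaneously (|SM| = |KM|/v) and minimizing the
cooperative delivery time t* = (|KM| + |MD|)/v. Then the better of the two solo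
delivery times is at most (5 + 4√2)/7 · t*. -/
theorem online_two_robot_competitive (v : ℝ) (hv : 1 < v)
    (S D K M : EuclideanSpace ℝ (Fin 2))
    (hmeet : dist S M = dist K M / v)
    (hopt : ∀ M' : EuclideanSpace ℝ (Fin 2), dist S M' = dist K M' / v →
      dist K M + dist M D ≤ dist K M' + dist M' D) :
    min (dist S D) ((dist K S + dist S D) / v) ≤
      (5 + 4 * Real.sqrt 2) / 7 * ((dist K M + dist M D) / v) := by
  have hv0 : (0:ℝ) < v := by linarith
  set s := Real.sqrt 2 with hs
  have hs2 : s ^ 2 = 2 := Real.sq_sqrt (by norm_num)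
  have hs1 : 1 < s := by nlinarith [Real.sqrt_nonneg 2, hs2]
  set a := dist K M with hadef
  set b := dist M D with hbdef
  have ha : 0 ≤ a := dist_nonneg
  have hb : 0 ≤ b := dist_nonneg
  have h1 : dist S D ≤ a / v + b := by
    calc dist S D ≤ dist S M + dist M D := dist_triangle S M D
    _ = a / v + b := by rw [hmeet]
  have h2 : dist K S ≤ a + a / v := by
    calc dist K S ≤ dist K M + dist M S := dist_triangle K M S
    _ = a + a / v := by rw [dist_comm M S, hmeet]
  rcases le_or_gt (a / v + b) ((5 + 4 * s) / 7 * ((a + b) / v)) with hle | hlt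
  · exact le_trans (le_trans (min_le_left _ _) h1) hle
  · refine le_trans (min_le_right _ _) ?_
    have H : (5 + 4 * s) * (a + b) ≤ 7 * (a + v * b) := by
      have h' : (5 + 4 * s) / 7 * ((a + b) / v) * v ≤ (a / v + b) * v :=
        mul_le_mul_of_nonneg_right hlt.le hv0.le
      have e1 : (5 + 4 * s) / 7 * ((a + b) / v) * v = (5 + 4 * s) * (a + b) / 7 := by
        field_simp
      have e2 : (a / v + b) * v = a + v * b := by
        field_simp
      rw [e1, e2] at h'
      linarith
    have key := key_poly v a b s hv ha hb hs2 hs1 H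
    have final : (a + 2 * (a / v) + b) / v ≤ (5 + 4 * s) / 7 * ((a + b) / v) := by
      rw [div_le_iff₀ hv0]
      have e1 : (5 + 4 * s) / 7 * ((a + b) / v) * v = (5 + 4 * s) * (a + b) / 7 := by
        field_simp
      rw [e1, le_div_iff₀ (by norm_num : (0:ℝ) < 7)]
      have e2 : a + 2 * (a / v) + b = (a * v + 2 * a + b * v) / v := by
        field_simp
      rw [e2, div_mul_eq_mul_div, div_le_iff₀ hv0]
      nlinarith [key]
    calc (dist K S + dist S D) / v ≤ (a + 2 * (a / v) + b) / v :=
          (div_le_div_iff_of_pos_right hv0).mpr (by linarith)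
      _ ≤ (5 + 4 * s) / 7 * ((a + b) / v) := final
end

section
/- On the instance with source S = (0,0), destination D = (1,0), a slow robot at S with speed 1/(1+√2), and a fast robot at (√2, 0) with speed 1, the optimal delivery time is 2 - 1/(1+√2), while the best solo delivery time (each robot going S then D alone) is 1 + √2; hence the ratio equals (5 + 4√2)/7. -/
lemma dist_pts (a b : ℝ) :
    dist ((EuclideanSpace.equiv (Fin 2) ℝ).symm ![a, 0])
      ((EuclideanSpace.equiv (Fin 2) ℝ).symm ![b, 0]) = |a - b| := by
  simp [EuclideanSpace.dist_eq, Fin.sum_univ_two, Real.sqrt_sq_eq_abs, Real.dist_eq]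

/-- tight instance for the two-robot online algorithm. Source
S = (0,0), destination D = (1,0), slow robot at S with speed 1/(1+√2), fast
robot at K = (√2,0) with speed 1. A handover strategy meeting at M takes time
max((1+√2)|SM|, |KM|) + |MD| (the fast robot finishes). The optimal delivery
time is 2 - 1/(1+√2): it is a lower bound for every handover point and is
attained at M = (1/(1+√2), 0), where both robots arrive at time 1. Each solo
delivery takes time 1 + √2, and the ratio equals (5 + 4√2)/7. -/
theorem online_tight_example :
    letI S : EuclideanSpace ℝ (Fin 2) := (EuclideanSpace.equiv (Fin 2) ℝ).symm ![0, 0]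
    letI D : EuclideanSpace ℝ (Fin 2) := (EuclideanSpace.equiv (Fin 2) ℝ).symm ![1, 0]
    letI K : EuclideanSpace ℝ (Fin 2) :=
      (EuclideanSpace.equiv (Fin 2) ℝ).symm ![Real.sqrt 2, 0]
    letI M : EuclideanSpace ℝ (Fin 2) :=
      (EuclideanSpace.equiv (Fin 2) ℝ).symm ![1 / (1 + Real.sqrt 2), 0]
    -- optimality: every handover strategy takes at least 2 - 1/(1+√2)
    (∀ P : EuclideanSpace ℝ (Fin 2),
      2 - 1 / (1 + Real.sqrt 2) ≤
        max ((1 + Real.sqrt 2) * dist S P) (dist K P) + dist P D) ∧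
    -- the bound is attained at M, where both robots arrive at time 1
    (1 + Real.sqrt 2) * dist S M = 1 ∧ dist K M = 1 ∧
    max ((1 + Real.sqrt 2) * dist S M) (dist K M) + dist M D
      = 2 - 1 / (1 + Real.sqrt 2) ∧
    -- solo delivery times
    dist S D / (1 / (1 + Real.sqrt 2)) = 1 + Real.sqrt 2 ∧
    (dist K S + dist S D) / 1 = 1 + Real.sqrt 2 ∧
    -- the resulting competitive ratio
    (1 + Real.sqrt 2) / (2 - 1 / (1 + Real.sqrt 2)) = (5 + 4 * Real.sqrt 2) / 7 := by
  have h2 : Real.sqrt 2 ^ 2 = 2 := Real.sq_sqrt (by norm_num)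
  have h1 : (1:ℝ) < Real.sqrt 2 := by nlinarith [Real.sqrt_nonneg 2]
  have hle : 1 / (1 + Real.sqrt 2) ≤ 1 := by
    rw [div_le_one (by positivity)]; linarith
  have hinv : 1 / (1 + Real.sqrt 2) = Real.sqrt 2 - 1 := by
    rw [div_eq_iff (by positivity)]; nlinarith
  have e1 : |(0:ℝ) - 1 / (1 + Real.sqrt 2)| = 1 / (1 + Real.sqrt 2) := by
    rw [zero_sub, abs_neg, abs_of_nonneg (by positivity)]
  have e2 : |Real.sqrt 2 - 1 / (1 + Real.sqrt 2)| = 1 := by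
    rw [hinv, abs_of_nonneg (by linarith)]; ring
  have e3 : |1 / (1 + Real.sqrt 2) - 1| = 1 - 1 / (1 + Real.sqrt 2) := by
    rw [abs_of_nonpos (by linarith)]; ring
  have e4 : |(0:ℝ) - 1| = 1 := by norm_num
  have e5 : |Real.sqrt 2 - 0| = Real.sqrt 2 := by
    rw [abs_of_nonneg (by linarith)]; ring
  simp only [dist_pts, e1, e2, e3, e4, e5]
  refine ⟨?_, ?_, trivial, ?_, ?_, ?_, ?_⟩
  · intro P
    set S : EuclideanSpace ℝ (Fin 2) := (EuclideanSpace.equiv (Fin 2) ℝ).symm ![0, 0]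
    set D : EuclideanSpace ℝ (Fin 2) := (EuclideanSpace.equiv (Fin 2) ℝ).symm ![1, 0]
    set K : EuclideanSpace ℝ (Fin 2) := (EuclideanSpace.equiv (Fin 2) ℝ).symm ![Real.sqrt 2, 0]
    have hSD : dist S D = 1 := by rw [dist_pts, e4]
    have hKS : dist K S = Real.sqrt 2 := by rw [dist_pts, e5]
    have t1 : dist S D ≤ dist S P + dist P D := dist_triangle S P D
    have t2 : dist K S ≤ dist K P + dist P S := dist_triangle K P S
    rw [hSD] at t1; rw [hKS, dist_comm P S] at t2
    rw [hinv]
    rcases le_total (dist S P) (Real.sqrt 2 - 1) with hc | hc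
    · have := le_max_right ((1 + Real.sqrt 2) * dist S P) (dist K P)
      linarith
    · have := le_max_left ((1 + Real.sqrt 2) * dist S P) (dist K P)
      have hd : dist S P ≥ 0 := dist_nonneg
      nlinarith
  · field_simp
  · have : (1 + Real.sqrt 2) * (1 / (1 + Real.sqrt 2)) = 1 := by field_simp
    rw [this, max_self]; ring
  · field_simp
  · ring
  · rw [hinv, div_eq_div_iff (by nlinarith) (by norm_num)]; nlinarith
end

section
/- For real y > 1, the function g(y) = (y² + 3y + 2)/(y² + y + 2) attains its maximum over y > 1 at y = √2, where g(√2) = (5 + 4√2)/7. -/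
/-- g(y) = (y² + 3y + 2)/(y² + y + 2) attains its maximum over
y > 1 at y = √2, where g(√2) = (5 + 4√2)/7. -/
theorem lower_bound_parametrized :
    (∀ y : ℝ, 1 < y →
      (y ^ 2 + 3 * y + 2) / (y ^ 2 + y + 2) ≤
        ((Real.sqrt 2) ^ 2 + 3 * Real.sqrt 2 + 2) /
          ((Real.sqrt 2) ^ 2 + Real.sqrt 2 + 2)) ∧
    ((Real.sqrt 2) ^ 2 + 3 * Real.sqrt 2 + 2) /
        ((Real.sqrt 2) ^ 2 + Real.sqrt 2 + 2)
      = (5 + 4 * Real.sqrt 2) / 7 := by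
  have hs2 : (Real.sqrt 2) ^ 2 = 2 := Real.sq_sqrt (by norm_num)
  have hs1 : (1 : ℝ) < Real.sqrt 2 := by
    nlinarith [Real.sqrt_nonneg 2]
  constructor
  · intro y hy
    have hd1 : (0:ℝ) < y ^ 2 + y + 2 := by nlinarith
    have hd2 : (0:ℝ) < (Real.sqrt 2) ^ 2 + Real.sqrt 2 + 2 := by nlinarith
    rw [div_le_div_iff₀ hd1 hd2]
    nlinarith [sq_nonneg (y - Real.sqrt 2), sq_nonneg y]
  · rw [hs2]
    rw [div_eq_div_iff (by nlinarith) (by norm_num)]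
    nlinarith
end

section
/- Suppose n robots have positions s₁,…,sₙ ≥ 0 (distances from the source along their paths) and speeds v₁,…,vₙ > 0, the source-destination distance is 1, and the cooperative optimal delivery time is t* > 0. Then there exists an index i with vᵢ ≥ (1 + sᵢ)/(2t*), and consequently robot i can deliver the message solo (traveling sᵢ to the source plus 1 to the destination) in time (1 + sᵢ)/vᵢ ≤ 2t*. -/
/-- A continuous function that at each time of `[a,b]` coincides with one of
finitely many Lipschitz curves whose speed is at most `K` travels at speed at
most `K` over `[a,b]`. -/
lemma selection_dist_le {E : Type*} [MetricSpace E] {ι : Type*} [Fintype ι]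
    {a b K : ℝ} (hab : a ≤ b) (hK : 0 ≤ K)
    (h : ℝ → E) (hc : Continuous h)
    (g : ι → ℝ → E) (L : ι → ℝ) (hL0 : ∀ j, 0 ≤ L j)
    (hg : ∀ j s t, dist (g j s) (g j t) ≤ L j * |s - t|)
    (hsel : ∀ u ∈ Set.Icc a b, ∃ j, h u = g j u ∧ L j ≤ K) :
    dist (h a) (h b) ≤ K * (b - a) := by
  classical
  set A : Set ℝ := {u | u ∈ Set.Icc a b ∧ dist (h a) (h u) ≤ K * (u - a)} with hA
  have hAclosed : IsClosed A := by
    have : A = Set.Icc a b ∩ {u | dist (h a) (h u) ≤ K * (u - a)} := by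
      ext u; simp [hA, Set.mem_inter_iff]
    rw [this]
    exact isClosed_Icc.inter (isClosed_le (continuous_const.dist hc)
      (by continuity))
  have haA : a ∈ A := ⟨⟨le_refl a, hab⟩, by simp⟩
  have hAbdd : BddAbove A := (bddAbove_Icc (a := a) (b := b)).mono
    (fun u hu => hu.1)
  set u₀ := sSup A with hu₀def
  have hu₀A : u₀ ∈ A := hAclosed.csSup_mem ⟨a, haA⟩ hAbdd
  have hu₀b : u₀ ≤ b := hu₀A.1.2
  have hu₀a : a ≤ u₀ := hu₀A.1.1
  -- Claim u₀ = b
  rcases eq_or_lt_of_le hu₀b with heq | hlt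
  · calc dist (h a) (h b) = dist (h a) (h u₀) := by rw [heq]
      _ ≤ K * (u₀ - a) := hu₀A.2
      _ = K * (b - a) := by rw [heq]
  · exfalso
    set Lmax : ℝ := ∑ j, L j with hLmaxdef
    have hLmax0 : 0 ≤ Lmax := Finset.sum_nonneg (fun j _ => hL0 j)
    have hLmax : ∀ j, L j ≤ Lmax := fun j =>
      Finset.single_le_sum (fun k _ => hL0 k) (Finset.mem_univ j)
    set F : Finset ι := Finset.univ.filter (fun j => g j u₀ ≠ h u₀) with hF
    set d : ℝ := if hne : F.Nonempty then F.inf' hne (fun j => dist (g j u₀) (h u₀)) else 1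
      with hd
    have hdpos : 0 < d := by
      rw [hd]
      split
      · rename_i hne
        rw [Finset.lt_inf'_iff]
        intro j hj
        have : g j u₀ ≠ h u₀ := by
          simpa [hF] using hj
        exact dist_pos.mpr this
      · norm_num
    have hdle : ∀ j, g j u₀ ≠ h u₀ → d ≤ dist (g j u₀) (h u₀) := by
      intro j hj
      have hjF : j ∈ F := by simp [hF, hj]
      rw [hd, dif_pos ⟨j, hjF⟩]
      exact Finset.inf'_le _ hjF
    obtain ⟨r, hr, hrd⟩ := Metric.continuous_iff.mp hc u₀ (d/2) (by linarith)
    set ρ : ℝ := min (min (r/2) (d/(2*(Lmax+1)))) (b - u₀) with hρ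
    have hρpos : 0 < ρ := by
      apply lt_min (lt_min (by linarith) _) (by linarith)
      positivity
    set u := u₀ + ρ with hu
    have huIcc : u ∈ Set.Icc a b := by
      constructor
      · linarith
      · have : ρ ≤ b - u₀ := min_le_right _ _
        linarith
    obtain ⟨j, hj, hjK⟩ := hsel u huIcc
    have hnear : dist (h u) (h u₀) < d/2 := by
      apply hrd
      rw [Real.dist_eq, hu]
      have h1 : ρ ≤ r/2 := le_trans (min_le_left _ _) (min_le_left _ _)
      rw [abs_of_pos (by linarith : (0:ℝ) < u₀ + ρ - u₀)]
      linarith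
    have hρd : Lmax * ρ < d/2 := by
      have h1 : ρ ≤ d/(2*(Lmax+1)) := le_trans (min_le_left _ _) (min_le_right _ _)
      have h2 : Lmax * ρ ≤ Lmax * (d/(2*(Lmax+1))) := by
        apply mul_le_mul_of_nonneg_left h1 hLmax0
      have h3 : Lmax * (d/(2*(Lmax+1))) < d/2 := by
        have hrw : Lmax * (d/(2*(Lmax+1))) = d * (Lmax/(Lmax+1)) / 2 := by
          field_simp
        have hx : Lmax/(Lmax+1) < 1 := (div_lt_one (by linarith)).mpr (by linarith)
        rw [hrw]
        have : d * (Lmax/(Lmax+1)) < d * 1 := by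
          apply mul_lt_mul_of_pos_left hx hdpos
        linarith
      linarith
    have hjco : g j u₀ = h u₀ := by
      by_contra hne
      have h1 : d ≤ dist (g j u₀) (h u₀) := hdle j hne
      have h2 : dist (g j u₀) (h u₀) ≤ dist (g j u₀) (g j u) + dist (g j u) (h u₀) :=
        dist_triangle _ _ _
      have h3 : dist (g j u₀) (g j u) ≤ L j * |u₀ - u| := hg j u₀ u
      have h4 : |u₀ - u| = ρ := by
        rw [hu, abs_of_nonpos (by linarith)]; ring
      have h5 : L j * ρ ≤ Lmax * ρ := mul_le_mul_of_nonneg_right (hLmax j) (le_of_lt hρpos)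
      have h6 : dist (g j u) (h u₀) = dist (h u) (h u₀) := by rw [hj]
      rw [h4] at h3
      rw [h6] at h2
      linarith
    have huA : u ∈ A := by
      refine ⟨huIcc, ?_⟩
      have h1 : dist (h a) (h u) ≤ dist (h a) (h u₀) + dist (h u₀) (h u) :=
        dist_triangle _ _ _
      have h2 : dist (h u₀) (h u) = dist (g j u₀) (g j u) := by rw [hjco, hj]
      have h3 : dist (g j u₀) (g j u) ≤ L j * |u₀ - u| := hg j u₀ u
      have h4 : |u₀ - u| = ρ := by
        rw [hu, abs_of_nonpos (by linarith)]; ring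
      have h5 : L j * ρ ≤ K * ρ := mul_le_mul_of_nonneg_right hjK (le_of_lt hρpos)
      have h6 : dist (h a) (h u₀) ≤ K * (u₀ - a) := hu₀A.2
      rw [h4] at h3
      have : K * (u₀ - a) + K * ρ = K * (u - a) := by rw [hu]; ring
      linarith
    have : u ≤ u₀ := le_csSup hAbdd huA
    linarith
/-- From finitely many strict positive margins, extract a uniform one. -/
lemma exists_pos_uniform {n : ℕ} (g : Fin n → ℝ) (hg : ∀ i, 0 < g i) :
    ∃ δ > 0, ∀ i, δ ≤ g i := by
  cases n with
  | zero => exact ⟨1, one_pos, fun i => i.elim0⟩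
  | succ m =>
    obtain ⟨i, -, hi⟩ := Finset.exists_min_image Finset.univ g ⟨0, Finset.mem_univ 0⟩
    exact ⟨g i, hg i, fun j => hi j (Finset.mem_univ j)⟩

/-- if n robots with starting positions P i (at distance
s i = |P i S| from the source) and speeds v i > 0 can cooperatively deliver the
message from S to D (with |SD| = 1) by time T > 0 — i.e. there are
speed-respecting trajectories f i and a continuous message trajectory always
located at S or at a co-located robot — then some robot i has
v i ≥ (1 + s i)/(2T), and hence can deliver solo in time (1 + s i)/(v i) ≤ 2T. -/
theorem exists_fast_solo_robot (n : ℕ) (S D : EuclideanSpace ℝ (Fin 2))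
    (P : Fin n → EuclideanSpace ℝ (Fin 2)) (v : Fin n → ℝ)
    (hSD : dist S D = 1) (hv : ∀ i, 0 < v i) (T : ℝ) (hT : 0 < T)
    (hdeliver : ∃ (f : Fin n → ℝ → EuclideanSpace ℝ (Fin 2))
        (msg : ℝ → EuclideanSpace ℝ (Fin 2)),
      (∀ i, f i 0 = P i) ∧
      (∀ i, LipschitzWith (Real.toNNReal (v i)) (f i)) ∧
      Continuous msg ∧ msg 0 = S ∧ msg T = D ∧
      (∀ t ∈ Set.Icc (0 : ℝ) T, msg t = S ∨ ∃ i, f i t = msg t)) :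
    ∃ i, v i ≥ (1 + dist (P i) S) / (2 * T) ∧
      (1 + dist (P i) S) / v i ≤ 2 * T := by
  -- It suffices to find i with 1 + dist (P i) S ≤ 2 * T * v i
  suffices hkey : ∃ i, 1 + dist (P i) S ≤ 2 * T * v i by
    obtain ⟨i, hi⟩ := hkey
    refine ⟨i, ?_, ?_⟩
    · rw [ge_iff_le, div_le_iff₀ (by linarith)]
      linarith
    · rw [div_le_iff₀ (hv i)]
      linarith [mul_comm (2*T) (v i)]
  by_contra hcon
  push_neg at hcon
  -- uniform margin δ
  obtain ⟨δ, hδ, hδle⟩ := exists_pos_uniform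
    (fun i => ((1 + dist (P i) S) / v i - 2 * T) / 2)
    (by
      intro i
      have h1 : 2 * T < (1 + dist (P i) S) / v i := by
        rw [lt_div_iff₀ (hv i)]
        have := hcon i
        linarith [mul_comm (2*T) (v i)]
      linarith)
  set M : ℝ := 2 * T + 2 * δ with hM
  set M' : ℝ := 2 * T + δ with hM'
  have hMv : ∀ i, M * v i ≤ 1 + dist (P i) S := by
    intro i
    have h1 := hδle i
    have h2 : 2 * T + 2 * δ ≤ (1 + dist (P i) S) / v i := by linarith
    calc M * v i ≤ ((1 + dist (P i) S) / v i) * v i :=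
          mul_le_mul_of_nonneg_right h2 (le_of_lt (hv i))
      _ = 1 + dist (P i) S := div_mul_cancel₀ _ (ne_of_gt (hv i))
  obtain ⟨f, msg, hf0, hflip, hmc, hm0, hmT, hloc⟩ := hdeliver
  set x : ℝ → ℝ := fun t => dist S (msg t) with hx
  have hxc : Continuous x := continuous_const.dist hmc
  have hx0 : ∀ t, 0 ≤ x t := fun t => dist_nonneg
  -- each robot's speed bound from Lipschitz
  have hfd : ∀ i (a b : ℝ), dist (f i a) (f i b) ≤ v i * |a - b| := by
    intro i a b
    have := (hflip i).dist_le_mul a b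
    rwa [Real.coe_toNNReal _ (le_of_lt (hv i)), Real.dist_eq] at this
  -- carrier speed bound
  have hcar : ∀ u, 0 ≤ u → ∀ i, f i u = msg u → v i * (M - u) ≤ 1 + x u := by
    intro u hu i hiu
    have h1 : dist (P i) S ≤ dist (P i) (f i u) + dist (f i u) S := dist_triangle _ _ _
    have h2 : dist (P i) (f i u) ≤ v i * u := by
      have := hfd i 0 u
      rw [hf0 i] at this
      rw [dist_comm]
      calc dist (f i u) (P i) = dist (f i 0) (f i u) := by rw [hf0 i, dist_comm]
        _ ≤ v i * |0 - u| := hfd i 0 u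
        _ = v i * u := by rw [abs_of_nonpos (by linarith)]; ring
    have h3 : dist (f i u) S = x u := by rw [hiu, dist_comm]
    have h4 := hMv i
    nlinarith [hv i]
  clear_value x M M'
  -- the barrier set
  set B : Set ℝ := {t | t ∈ Set.Icc (0:ℝ) T ∧ x t * (M' - t) ≤ t} with hB
  have hBclosed : IsClosed B := by
    have : B = Set.Icc (0:ℝ) T ∩ {t | x t * (M' - t) ≤ t} := by
      ext t; simp [hB, Set.mem_inter_iff]
    rw [this]
    exact isClosed_Icc.inter (isClosed_le (hxc.mul (continuous_const.sub continuous_id)) continuous_id)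
  have h0B : (0:ℝ) ∈ B := by
    refine ⟨⟨le_refl 0, le_of_lt hT⟩, ?_⟩
    have : x 0 = 0 := by rw [hx]; simp [hm0]
    rw [this]; norm_num
  have hBbdd : BddAbove B := (bddAbove_Icc (a := (0:ℝ)) (b := T)).mono (fun u hu => hu.1)
  have hBdef : ∀ t, t ∈ B ↔ (t ∈ Set.Icc (0:ℝ) T ∧ x t * (M' - t) ≤ t) := fun _ => Iff.rfl
  clear_value B
  set t₀ := sSup B with ht₀def
  have ht₀B : t₀ ∈ B := hBclosed.csSup_mem ⟨0, h0B⟩ hBbdd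
  clear_value t₀
  have ht₀B' := (hBdef t₀).mp ht₀B
  have ht₀0 : 0 ≤ t₀ := ht₀B'.1.1
  have ht₀T : t₀ ≤ T := ht₀B'.1.2
  have hTt₀ : t₀ = T := by
    by_contra hne
    have hlt : t₀ < T := lt_of_le_of_ne ht₀T hne
    set η : ℝ := δ / (2 * M') with hη
    have hM'pos : 0 < M' := by rw [hM']; linarith
    have hηpos : 0 < η := by rw [hη]; positivity
    clear_value η
    obtain ⟨r, hr, hrd⟩ := Metric.continuous_iff.mp hxc t₀ η hηpos
    set ρ : ℝ := min (min (r/2) (δ/2)) (T - t₀) with hρ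
    have hρpos : 0 < ρ := by
      apply lt_min (lt_min (by linarith) (by linarith)) (by linarith)
    have hρr : ρ ≤ r/2 := le_trans (min_le_left _ _) (min_le_left _ _)
    have hρδ : ρ ≤ δ/2 := le_trans (min_le_left _ _) (min_le_right _ _)
    have hρT : ρ ≤ T - t₀ := min_le_right _ _
    clear_value ρ
    set t₁ := t₀ + ρ with ht₁
    clear_value t₁
    set K : ℝ := (1 + x t₀ + η) / (M - t₀ - ρ) with hK
    clear_value K
    have hden : 0 < M - t₀ - ρ := by
      rw [hM]
      have : t₀ + ρ ≤ T := by linarith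
      linarith
    have hKpos : 0 ≤ K := by
      rw [hK]
      apply div_nonneg _ (le_of_lt hden)
      have := hx0 t₀
      linarith
    -- x stays close on the window
    have hxwin : ∀ u, t₀ ≤ u → u ≤ t₁ → x u ≤ x t₀ + η := by
      intro u h1 h2
      have : dist (x u) (x t₀) < η := by
        apply hrd
        rw [Real.dist_eq, abs_of_nonneg (by linarith)]
        have : u - t₀ ≤ ρ := by linarith
        linarith
      have := abs_lt.mp (by rwa [Real.dist_eq] at this)
      linarith [this.1, this.2]
    -- apply the selection lemma on [t₀, t₁]
    have hsel : ∀ u ∈ Set.Icc t₀ t₁,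
        ∃ j : Option (Fin n),
          msg u = (fun j => Option.elim j (fun _ => S) (fun i => f i)) j u ∧
          (Option.elim j 0 v : ℝ) ≤ K := by
      intro u hu
      have huIcc : u ∈ Set.Icc (0:ℝ) T := ⟨le_trans ht₀0 hu.1, le_trans hu.2 (by linarith)⟩
      rcases hloc u huIcc with hS | ⟨i, hi⟩
      · exact ⟨none, by simpa using hS, by simpa using hKpos⟩
      · refine ⟨some i, by simpa using hi.symm, ?_⟩
        simp only [Option.elim]
        have h1 : v i * (M - u) ≤ 1 + x u := hcar u huIcc.1 i hi
        have h2 : x u ≤ x t₀ + η := hxwin u hu.1 hu.2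
        have h3 : M - t₀ - ρ ≤ M - u := by
          have : u ≤ t₁ := hu.2
          rw [ht₁] at this
          linarith
        rw [hK, le_div_iff₀ hden]
        have h4 : v i * (M - t₀ - ρ) ≤ v i * (M - u) :=
          mul_le_mul_of_nonneg_left h3 (le_of_lt (hv i))
        linarith
    have hdist : dist (msg t₀) (msg t₁) ≤ K * (t₁ - t₀) := by
      apply selection_dist_le (by linarith : t₀ ≤ t₁) hKpos msg hmc
        (fun j => Option.elim j (fun _ => S) (fun i => f i))
        (fun j => Option.elim j 0 v)
        (fun j => by cases j <;> simp [le_of_lt (hv _)])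
        (fun j a b => by
          cases j with
          | none => simp
          | some i => simpa using hfd i a b)
        hsel
    -- conclude t₁ ∈ B
    have hxt₁ : x t₁ ≤ x t₀ + K * ρ := by
      have h1 : x t₁ ≤ x t₀ + dist (msg t₀) (msg t₁) := by
        rw [hx]
        calc dist S (msg t₁) ≤ dist S (msg t₀) + dist (msg t₀) (msg t₁) := dist_triangle _ _ _
          _ = _ := rfl
      have h2 : t₁ - t₀ = ρ := by rw [ht₁]; ring
      rw [h2] at hdist
      linarith
    have ht₁B : t₁ ∈ B := by
      rw [hBdef]
      refine ⟨⟨by linarith, by linarith⟩, ?_⟩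
      -- algebra: (x t₀ + K ρ)(M' - t₀ - ρ) ≤ t₀ + ρ
      have ha0 : x t₀ * (M' - t₀) ≤ t₀ := ht₀B'.2
      have hP : 0 < M' - t₀ - ρ := by rw [hM']; linarith
      -- key : K * (M' - t₀ - ρ) ≤ 1 + x t₀
      have hkey : K * (M' - t₀ - ρ) ≤ 1 + x t₀ := by
        rw [hK, div_mul_eq_mul_div, div_le_iff₀ hden]
        -- (1 + x t₀ + η)(M' - t₀ - ρ) ≤ (1 + x t₀)(M - t₀ - ρ)
        -- since M - t₀ - ρ = (M' - t₀ - ρ) + δ and η (M' - t₀ - ρ) ≤ (1 + x t₀) δ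
        have hMM' : M - t₀ - ρ = (M' - t₀ - ρ) + δ := by rw [hM, hM']; ring
        have hηb : η * (M' - t₀ - ρ) ≤ δ / 2 := by
          have h1 : M' - t₀ - ρ ≤ M' := by linarith
          have h2 : η * (M' - t₀ - ρ) ≤ η * M' := by
            apply mul_le_mul_of_nonneg_left h1 (le_of_lt hηpos)
          have h3 : η * M' = δ / 2 := by
            rw [hη]; field_simp
          linarith
        rw [hMM']
        nlinarith [hηb, mul_nonneg (hx0 t₀) hδ.le]
      have hmono : x t₁ * (M' - t₁) ≤ (x t₀ + K * ρ) * (M' - t₀ - ρ) := by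
        have h1 : M' - t₁ = M' - t₀ - ρ := by rw [ht₁]; ring
        rw [h1]
        apply mul_le_mul_of_nonneg_right hxt₁ (le_of_lt hP)
      have hfin : (x t₀ + K * ρ) * (M' - t₀ - ρ) ≤ t₀ + ρ := by
        have expand : (x t₀ + K * ρ) * (M' - t₀ - ρ)
            = x t₀ * (M' - t₀) - x t₀ * ρ + ρ * (K * (M' - t₀ - ρ)) := by ring
        have h5 : ρ * (K * (M' - t₀ - ρ)) ≤ ρ * (1 + x t₀) :=
          mul_le_mul_of_nonneg_left hkey (le_of_lt hρpos)
        have h6 : ρ * (1 + x t₀) = ρ + x t₀ * ρ := by ring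
        linarith
      calc x t₁ * (M' - t₁) ≤ (x t₀ + K * ρ) * (M' - t₀ - ρ) := hmono
        _ ≤ t₀ + ρ := hfin
        _ = t₁ := by rw [ht₁]
    have : t₁ ≤ t₀ := by rw [ht₀def]; exact le_csSup hBbdd ht₁B
    rw [ht₁] at this
    linarith
  -- now t₀ = T ∈ B gives x T (M' - T) ≤ T with x T = 1
  have hTB : T ∈ B := hTt₀ ▸ ht₀B
  have hxT : x T = 1 := by rw [hx]; simp [hmT, hSD]
  have := ((hBdef T).mp hTB).2
  rw [hxT, hM'] at this
  linarith
end
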